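/- Let ξ_n > 0 and η_n > 0 be sequences with ξ_n η_n → 0 and n^{1/2} η_n → ∞, and let k_n be integers with 1 ≤ k_n < n such that n − k_n is eventually constant equal to m. Suppose θ_n ∈ ℝ and σ_n ∈ (0,∞) satisfy θ_n/(σ_n ξ_n η_n) → ζ in the extended real line. For each n let Z_n have law N(θ_n, σ_n²ξ_n²/n), let S_n be independent of Z_n with density ρ_{n−k_n}, and let μ_n be the law of σ_n^{−1}(ξ_n η_n)^{−1}(θ̃_{S,n} − θ_n) where θ̃_{S,n} = sign(Z_n)(|Z_n| − σ_n S_n ξ_n η_n)_+ with (·)_+ = max(·, 0). Then: if ζ ∈ ℝ, μ_n converges weakly to the measure (∫_{|ζ|}^∞ ρ_m(s) ds)·δ_{−ζ} + λ, where λ has Lebesgue density x ↦ ρ_m(x)·1(x + ζ < 0) + ρ_m(−x)·1(x + ζ > 0); if ζ = +∞ (respectively ζ = −∞), μ_n converges weakly to the measure with Lebesgue density x ↦ ρ_m(−x) (respectively x ↦ ρ_m(x)). -/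

import Mathlib

/-!
Write `Z = θ + (σ ξ / √n) g` with `g` standard Gaussian. Soft thresholding commutes with positive
scalings, so the rescaled error is `soft (t + ε g) S - t` with `t = θ / (σ ξ η)` and
`ε = (√n η)⁻¹ → 0`. For `S > 0` the map `w ↦ soft w S` is continuous, so the error converges
pointwise to `soft ζ S - ζ` (to `-S`, resp. `S`, when `ζ = +∞`, resp. `-∞`), and dominated
convergence upgrades this to weak convergence of the laws. The limit is the image of the law of
`S` under `s ↦ soft ζ s - ζ`, which equals `-ζ` for `s ≥ |ζ|`, `s` for `0 < s < -ζ` and `-s`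
for `0 < s < ζ`: an atom of mass `P(S ≥ |ζ|)` at `-ζ` plus the two density pieces.
-/

open MeasureTheory ProbabilityTheory Filter Set

/-- Standard normal cdf. -/
noncomputable def Phi (x : ℝ) : ℝ :=
  ∫ t in Iic x, (Real.sqrt (2 * Real.pi))⁻¹ * Real.exp (-t ^ 2 / 2)

/-- Standard normal pdf. -/
noncomputable def stdPhi (t : ℝ) : ℝ :=
  (Real.sqrt (2 * Real.pi))⁻¹ * Real.exp (-t ^ 2 / 2)

/-- Extension of `Phi` to the extended reals, with `PhiE ⊤ = 1` and `PhiE ⊥ = 0`. -/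
noncomputable def PhiE (z : EReal) : ℝ :=
  if z = ⊤ then 1 else if z = ⊥ then 0 else Phi z.toReal

/-- Density of `m^{-1/2}` times the square root of a chi-square with `m` degrees of freedom. -/
noncomputable def rho (m : ℕ) (s : ℝ) : ℝ :=
  if 0 < s then
    (2 : ℝ) ^ ((1 : ℝ) - (m : ℝ) / 2) * (Real.Gamma ((m : ℝ) / 2))⁻¹ * Real.sqrt m *
      ((m : ℝ) * s ^ 2) ^ (((m : ℝ) - 1) / 2) * Real.exp (-(m : ℝ) * s ^ 2 / 2)
  else 0

/-- Joint law of the least-squares coordinate `Z ~ N(θ, σ²ξ²/n)` and the independent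
variance-estimator ratio `S` with density `rho m`. -/
noncomputable def jointMeas (n m : ℕ) (ξ θ σ : ℝ) : Measure (ℝ × ℝ) :=
  (gaussianReal θ (Real.toNNReal (σ ^ 2 * ξ ^ 2 / n))).prod
    (volume.withDensity fun s => ENNReal.ofReal (rho m s))

/-- Feasible hard-thresholding estimator `Z · 1(|Z| > σSξη)`. -/
noncomputable def hardF (σ ξ η : ℝ) (p : ℝ × ℝ) : ℝ :=
  if σ * p.2 * ξ * η < |p.1| then p.1 else 0

/-- Feasible soft-thresholding estimator `sign(Z)(|Z| − σSξη)₊`. -/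
noncomputable def softF (σ ξ η : ℝ) (p : ℝ × ℝ) : ℝ :=
  Real.sign p.1 * max (|p.1| - σ * p.2 * ξ * η) 0

/-- Feasible adaptive soft-thresholding estimator `Z(1 − σ²S²ξ²η²/Z²)₊`. -/
noncomputable def adaptF (σ ξ η : ℝ) (p : ℝ × ℝ) : ℝ :=
  if p.1 = 0 then 0 else p.1 * max (1 - (σ * p.2 * ξ * η) ^ 2 / p.1 ^ 2) 0

/-- Weak convergence of a sequence of Borel measures on `ℝ`: integrals of every bounded
continuous function converge. -/
def WeakConv (μ : ℕ → Measure ℝ) (ν : Measure ℝ) : Prop :=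
  ∀ f : ℝ → ℝ, Continuous f → (∃ C : ℝ, ∀ x, |f x| ≤ C) →
    Tendsto (fun n => ∫ x, f x ∂(μ n)) atTop (nhds (∫ x, f x ∂ν))

open scoped ENNReal Topology

lemma rho_nonneg (m : ℕ) (s : ℝ) : 0 ≤ rho m s := by
  unfold rho
  split_ifs
  · have : 0 ≤ (Real.Gamma ((m : ℝ) / 2))⁻¹ :=
      inv_nonneg.2 (Real.Gamma_nonneg_of_nonneg (by positivity))
    positivity
  · exact le_rfl

lemma rho_of_nonpos (m : ℕ) {s : ℝ} (hs : s ≤ 0) : rho m s = 0 :=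
  if_neg hs.not_gt

lemma measurable_rho (m : ℕ) : Measurable (rho m) :=
  Measurable.ite measurableSet_Ioi (by fun_prop) measurable_const

lemma rho_eq_indicator (m : ℕ) :
    rho m = (Ioi 0).indicator fun s =>
      (2 : ℝ) ^ ((1 : ℝ) - m / 2) * (Real.Gamma (m / 2))⁻¹ * Real.sqrt m *
        (m : ℝ) ^ ((m - 1 : ℝ) / 2) * (s ^ ((m : ℝ) - 1) * Real.exp (-(m / 2) * s ^ 2)) := by
  funext s
  by_cases hs : 0 < s
  · rw [indicator_of_mem (mem_Ioi.2 hs), rho, if_pos hs,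
      Real.mul_rpow (by positivity) (by positivity), ← Real.rpow_natCast s 2, ← Real.rpow_mul hs.le]
    ring_nf
  · rw [indicator_of_notMem (notMem_Ioi.2 (not_lt.1 hs)), rho_of_nonpos m (not_lt.1 hs)]

lemma integrable_rho (m : ℕ) : Integrable (rho m) := by
  rcases Nat.eq_zero_or_pos m with rfl | hm
  · have : rho 0 = 0 := funext fun s => by simp [rho]
    exact this ▸ integrable_zero ℝ ℝ volume
  have hm' : (1 : ℝ) ≤ m := by exact_mod_cast hm
  rw [rho_eq_indicator, integrable_indicator_iff measurableSet_Ioi]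
  exact (integrableOn_rpow_mul_exp_neg_mul_sq (by positivity) (by linarith)).const_mul _

noncomputable def rhoMeasure (m : ℕ) : Measure ℝ :=
  volume.withDensity fun s => ENNReal.ofReal (rho m s)

instance (m : ℕ) : IsFiniteMeasure (rhoMeasure m) :=
  isFiniteMeasure_withDensity_ofReal (integrable_rho m).2

lemma ae_pos_rhoMeasure (m : ℕ) : ∀ᵐ s ∂rhoMeasure m, 0 < s := by
  rw [rhoMeasure, ae_withDensity_iff (measurable_rho m).ennreal_ofReal]
  refine ae_of_all _ fun s hs => ?_
  by_contra h
  exact hs (by rw [rho_of_nonpos m (not_lt.1 h), ENNReal.ofReal_zero])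

lemma rhoMeasure_apply_Ici (m : ℕ) (a : ℝ) :
    rhoMeasure m (Ici a) = ENNReal.ofReal (∫ s in Ioi a, rho m s) := by
  rw [rhoMeasure, withDensity_apply _ measurableSet_Ici, ← integral_Ici_eq_integral_Ioi,
    ofReal_integral_eq_lintegral_ofReal (integrable_rho m).integrableOn
      (ae_of_all _ (rho_nonneg m))]

section Soft

noncomputable def soft (w s : ℝ) : ℝ :=
  Real.sign w * max (|w| - s) 0

lemma softF_eq_soft (σ ξ η : ℝ) (p : ℝ × ℝ) : softF σ ξ η p = soft p.1 (σ * p.2 * ξ * η) :=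
  rfl

lemma Real.measurable_sign : Measurable Real.sign :=
  Measurable.ite measurableSet_Iio measurable_const
    (Measurable.ite measurableSet_Ioi measurable_const measurable_const)

lemma measurable_soft : Measurable (Function.uncurry soft) :=
  (Real.measurable_sign.comp measurable_fst).mul
    ((measurable_fst.abs.sub measurable_snd).max measurable_const)

lemma Real.sign_mul_of_pos {a : ℝ} (ha : 0 < a) (w : ℝ) : Real.sign (a * w) = Real.sign w := by
  rcases lt_trichotomy w 0 with hw | rfl | hw
  · rw [Real.sign_of_neg hw, Real.sign_of_neg (mul_neg_of_pos_of_neg ha hw)]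
  · rw [mul_zero]
  · rw [Real.sign_of_pos hw, Real.sign_of_pos (mul_pos ha hw)]

lemma soft_mul_mul {a : ℝ} (ha : 0 < a) (w s : ℝ) : soft (a * w) (a * s) = a * soft w s := by
  rw [soft, soft, Real.sign_mul_of_pos ha, abs_mul, abs_of_pos ha, ← mul_sub,
    show max (a * (|w| - s)) 0 = a * max (|w| - s) 0 by rw [mul_max_of_nonneg _ _ ha.le, mul_zero]]
  ring

lemma soft_eq_max_add_min {s : ℝ} (hs : 0 ≤ s) (w : ℝ) :
    soft w s = max (w - s) 0 + min (w + s) 0 := by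
  rcases lt_trichotomy w 0 with hw | rfl | hw
  · rw [soft, Real.sign_of_neg hw, abs_of_neg hw, max_eq_right (by linarith : w - s ≤ 0)]
    rcases le_total (w + s) 0 with h | h
    · rw [min_eq_left h, max_eq_left (by linarith)]; ring
    · rw [min_eq_right h, max_eq_right (by linarith)]; ring
  · simp [soft, hs]
  · rw [soft, Real.sign_of_pos hw, abs_of_pos hw, min_eq_right (by linarith : 0 ≤ w + s)]
    ring

lemma continuous_soft_left {s : ℝ} (hs : 0 ≤ s) : Continuous fun w => soft w s := by
  simp_rw [soft_eq_max_add_min hs]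
  fun_prop

lemma continuous_soft_right (w : ℝ) : Continuous (soft w) := by
  unfold soft
  fun_prop

lemma soft_of_abs_le {w s : ℝ} (h : |w| ≤ s) : soft w s = 0 := by
  rw [soft, max_eq_right (sub_nonpos.2 h), mul_zero]

lemma soft_of_le {w s : ℝ} (hs : 0 ≤ s) (h : s ≤ w) : soft w s = w - s := by
  rw [soft_eq_max_add_min hs, max_eq_left (sub_nonneg.2 h), min_eq_right (by linarith)]
  ring

lemma soft_of_le_neg {w s : ℝ} (hs : 0 ≤ s) (h : w ≤ -s) : soft w s = w + s := by
  rw [soft_eq_max_add_min hs, max_eq_right (by linarith), min_eq_left (by linarith)]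
  ring

variable {ι : Type*} {l : Filter ι} {w t : ι → ℝ} {s : ℝ}

lemma tendsto_soft_sub_of_tendsto {ζ : ℝ} (hs : 0 ≤ s) (ht : Tendsto t l (𝓝 ζ))
    (hwt : Tendsto (fun i => w i - t i) l (𝓝 0)) :
    Tendsto (fun i => soft (w i) s - t i) l (𝓝 (soft ζ s - ζ)) := by
  have hw : Tendsto w l (𝓝 ζ) := by simpa using ht.add hwt
  exact ((continuous_soft_left hs).tendsto ζ |>.comp hw).sub ht

lemma tendsto_soft_sub_of_tendsto_atTop (hs : 0 ≤ s) (ht : Tendsto t l atTop)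
    (hwt : Tendsto (fun i => w i - t i) l (𝓝 0)) :
    Tendsto (fun i => soft (w i) s - t i) l (𝓝 (-s)) := by
  have hw : Tendsto w l atTop := by simpa using ht.atTop_add hwt
  refine (by simpa using hwt.sub_const s : Tendsto (fun i => w i - t i - s) l (𝓝 (-s))).congr' ?_
  filter_upwards [hw.eventually_ge_atTop s] with i hi
  rw [soft_of_le hs hi]
  ring

lemma tendsto_soft_sub_of_tendsto_atBot (hs : 0 ≤ s) (ht : Tendsto t l atBot)
    (hwt : Tendsto (fun i => w i - t i) l (𝓝 0)) :
    Tendsto (fun i => soft (w i) s - t i) l (𝓝 s) := by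
  have hw : Tendsto w l atBot := by simpa using ht.atBot_add hwt
  refine (by simpa using hwt.add_const s : Tendsto (fun i => w i - t i + s) l (𝓝 s)).congr' ?_
  filter_upwards [hw.eventually_le_atBot (-s)] with i hi
  rw [soft_of_le_neg hs hi]
  ring

end Soft

lemma WeakConv.congr_eventually {μ μ' : ℕ → Measure ℝ} {ν : Measure ℝ}
    (h : ∀ᶠ n in atTop, μ n = μ' n) (h' : WeakConv μ' ν) : WeakConv μ ν := fun f hf hbdd =>
  (h' f hf hbdd).congr' (h.mono fun n hn => by simp only [hn])

lemma weakConv_map_of_ae_tendsto {Ω : Type*} [MeasurableSpace Ω] {P : Measure Ω}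
    [IsFiniteMeasure P] {X : ℕ → Ω → ℝ} {Y : Ω → ℝ} (hX : ∀ n, AEMeasurable (X n) P)
    (hlim : ∀ᵐ ω ∂P, Tendsto (fun n => X n ω) atTop (𝓝 (Y ω))) :
    WeakConv (fun n => P.map (X n)) (P.map Y) := by
  rintro f hf ⟨C, hC⟩
  have hY : AEMeasurable Y P := aemeasurable_of_tendsto_metrizable_ae' hX hlim
  simp_rw [integral_map (hX _) hf.aestronglyMeasurable, integral_map hY hf.aestronglyMeasurable]
  refine tendsto_integral_of_dominated_convergence (fun _ => C)
    (fun n => (hf.measurable.comp_aemeasurable (hX n)).aestronglyMeasurable) (integrable_const C)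
    (fun n => ae_of_all _ fun ω => hC _) ?_
  filter_upwards [hlim] with ω hω using (hf.tendsto _).comp hω

lemma map_neg_withDensity (f : ℝ → ℝ≥0∞) :
    (volume.withDensity f).map (fun x => -x) = volume.withDensity fun x => f (-x) := by
  ext s hs
  have h := (Measure.measurePreserving_neg volume).setLIntegral_comp_preimage_emb
    (Homeomorph.neg ℝ).measurableEmbedding (fun x => f (-x)) s
  simp only [neg_neg] at h
  rw [Measure.map_apply measurable_neg hs, withDensity_apply _ (measurable_neg hs),
    withDensity_apply _ hs, ← h]

lemma map_gaussianReal_const_add_mul (θ c : ℝ) :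
    (gaussianReal 0 1).map (fun g => θ + c * g) = gaussianReal θ (c ^ 2).toNNReal := by
  have h : (fun g : ℝ => θ + c * g) = (θ + ·) ∘ (c * ·) := rfl
  rw [h, ← Measure.map_map (measurable_const_add θ) (measurable_const_mul c),
    gaussianReal_map_const_mul, gaussianReal_map_const_add, mul_zero, zero_add, mul_one,
    Real.toNNReal_of_nonneg (sq_nonneg c)]

lemma map_jointMeas_eq_map_soft (n m : ℕ) {ξ η θ σ : ℝ} (hξ : 0 < ξ) (hη : 0 < η) (hσ : 0 < σ) :
    (jointMeas n m ξ θ σ).map (fun p => σ⁻¹ * (ξ * η)⁻¹ * (softF σ ξ η p - θ)) =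
      ((gaussianReal 0 1).prod (rhoMeasure m)).map fun p =>
        soft (θ / (σ * ξ * η) + (Real.sqrt n * η)⁻¹ * p.1) p.2 - θ / (σ * ξ * η) := by
  set a := σ * ξ * η
  set c := σ * ξ / Real.sqrt n
  have ha : 0 < a := by positivity
  have hac : a * (Real.sqrt n * η)⁻¹ = c := by
    simp only [a, c, mul_inv, div_eq_mul_inv]
    field_simp
  have hjoint : jointMeas n m ξ θ σ =
      ((gaussianReal 0 1).prod (rhoMeasure m)).map (Prod.map (fun g => θ + c * g) id) := by
    rw [← Measure.map_prod_map _ _ (by fun_prop) measurable_id, Measure.map_id,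
      map_gaussianReal_const_add_mul, div_pow, Real.sq_sqrt n.cast_nonneg, mul_pow]
    rfl
  have hmeas : Measurable fun p : ℝ × ℝ => σ⁻¹ * (ξ * η)⁻¹ * (softF σ ξ η p - θ) :=
    ((measurable_soft.comp (measurable_fst.prodMk
      (((measurable_snd.const_mul σ).mul_const ξ).mul_const η))).sub_const θ).const_mul _
  rw [hjoint, Measure.map_map hmeas (by fun_prop)]
  congr 1
  funext p
  have hz : θ + c * p.1 = a * (θ / a + (Real.sqrt n * η)⁻¹ * p.1) := by
    rw [mul_add, mul_div_cancel₀ _ ha.ne', ← mul_assoc, hac]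
  simp only [Function.comp_apply, Prod.map_fst, Prod.map_snd, id, softF_eq_soft, hz,
    show σ * p.2 * ξ * η = a * p.2 by ring, soft_mul_mul ha]
  rw [show σ⁻¹ * (ξ * η)⁻¹ = a⁻¹ by simp only [a, mul_inv, mul_assoc], mul_sub,
    inv_mul_cancel_left₀ ha.ne', div_eq_inv_mul]

lemma weakConv_of_tendsto_soft {m : ℕ} {μ : ℕ → Measure ℝ} {t ε : ℕ → ℝ} {φ : ℝ → ℝ}
    (hφ : Measurable φ)
    (hμ : ∀ᶠ n in atTop, μ n = ((gaussianReal 0 1).prod (rhoMeasure m)).map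
      fun p => soft (t n + ε n * p.1) p.2 - t n)
    (hε : Tendsto ε atTop (𝓝 0))
    (hφlim : ∀ s, 0 < s → ∀ w : ℕ → ℝ, Tendsto (fun n => w n - t n) atTop (𝓝 0) →
      Tendsto (fun n => soft (w n) s - t n) atTop (𝓝 (φ s))) :
    WeakConv μ ((rhoMeasure m).map φ) := by
  have hsnd : (rhoMeasure m).map φ =
      ((gaussianReal 0 1).prod (rhoMeasure m)).map (φ ∘ Prod.snd) := by
    rw [← Measure.map_map hφ measurable_snd, Measure.map_snd_prod, measure_univ, one_smul]
  rw [hsnd]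
  refine WeakConv.congr_eventually hμ (weakConv_map_of_ae_tendsto (fun n => ?_) ?_)
  · exact ((measurable_soft.comp (((measurable_fst.const_mul _).const_add _).prodMk
      measurable_snd)).sub_const _).aemeasurable
  · filter_upwards [Measure.quasiMeasurePreserving_snd.ae (ae_pos_rhoMeasure m)] with p hp
    exact hφlim p.2 hp _ (by simpa using hε.mul_const p.1)

/- For `s > 0` exactly one of `|ζ| ≤ s`, `s < -ζ`, `s < ζ` holds, and `rho m` vanishes on
`s ≤ 0`. -/
lemma rhoMeasure_eq_restrict_add_restrict_add_restrict (m : ℕ) (ζ : ℝ) :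
    rhoMeasure m = (rhoMeasure m).restrict (Ici |ζ|) + (rhoMeasure m).restrict (Iio (-ζ)) +
      (rhoMeasure m).restrict (Iio ζ) := by
  have hf : Measurable fun s => ENNReal.ofReal (rho m s) := (measurable_rho m).ennreal_ofReal
  rw [rhoMeasure, restrict_withDensity measurableSet_Ici, ← withDensity_indicator measurableSet_Ici,
    restrict_withDensity measurableSet_Iio, ← withDensity_indicator measurableSet_Iio,
    restrict_withDensity measurableSet_Iio, ← withDensity_indicator measurableSet_Iio,
    ← withDensity_add_left (hf.indicator measurableSet_Ici),
    ← withDensity_add_left ((hf.indicator measurableSet_Ici).add (hf.indicator measurableSet_Iio))]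
  congr 1
  funext s
  simp only [Pi.add_apply, indicator_apply, mem_Ici, mem_Iio]
  by_cases hs : 0 < s
  · rcases abs_cases ζ with ⟨h, _⟩ | ⟨h, _⟩ <;> rw [h] <;> split_ifs <;> first | linarith | simp
  · simp [rho_of_nonpos m (not_lt.1 hs)]

lemma map_rhoMeasure_soft_sub (m : ℕ) (ζ : ℝ) :
    (rhoMeasure m).map (fun s => soft ζ s - ζ) =
      ENNReal.ofReal (∫ s in Ioi |ζ|, rho m s) • Measure.dirac (-ζ) +
        volume.withDensity fun x => ENNReal.ofReal
          (rho m x * (if x + ζ < 0 then 1 else 0) + rho m (-x) * (if 0 < x + ζ then 1 else 0)) := by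
  have hφ : Measurable fun s => soft ζ s - ζ :=
    ((continuous_soft_right ζ).sub continuous_const).measurable
  have hpos (A : Set ℝ) : ∀ᵐ s ∂(rhoMeasure m).restrict A, 0 < s :=
    ae_restrict_of_ae (ae_pos_rhoMeasure m)
  have hIci : ((rhoMeasure m).restrict (Ici |ζ|)).map (fun s => soft ζ s - ζ) =
      ENNReal.ofReal (∫ s in Ioi |ζ|, rho m s) • Measure.dirac (-ζ) := by
    rw [Measure.map_congr (g := fun _ => -ζ), Measure.map_const, Measure.restrict_apply_univ,
      rhoMeasure_apply_Ici]
    filter_upwards [ae_restrict_mem measurableSet_Ici] with s hs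
    rw [soft_of_abs_le hs, zero_sub]
  have hIio_neg : ((rhoMeasure m).restrict (Iio (-ζ))).map (fun s => soft ζ s - ζ) =
      (rhoMeasure m).restrict (Iio (-ζ)) := by
    conv_rhs => rw [← Measure.map_id (μ := (rhoMeasure m).restrict (Iio (-ζ)))]
    refine Measure.map_congr ?_
    filter_upwards [ae_restrict_mem measurableSet_Iio, hpos _] with s hs hs0
    rw [soft_of_le_neg hs0.le (by linarith [mem_Iio.1 hs])]
    simp
  have hIio : ((rhoMeasure m).restrict (Iio ζ)).map (fun s => soft ζ s - ζ) =
      ((rhoMeasure m).restrict (Iio ζ)).map (fun s => -s) := by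
    refine Measure.map_congr ?_
    filter_upwards [ae_restrict_mem measurableSet_Iio, hpos _] with s hs hs0
    rw [soft_of_le hs0.le (mem_Iio.1 hs).le]
    ring
  conv_lhs => rw [rhoMeasure_eq_restrict_add_restrict_add_restrict m ζ]
  rw [Measure.map_add _ _ hφ, Measure.map_add _ _ hφ, hIci, hIio_neg, hIio, add_assoc]
  congr 1
  have hf : Measurable fun s => ENNReal.ofReal (rho m s) := (measurable_rho m).ennreal_ofReal
  rw [rhoMeasure, restrict_withDensity measurableSet_Iio, ← withDensity_indicator measurableSet_Iio,
    restrict_withDensity measurableSet_Iio, ← withDensity_indicator measurableSet_Iio,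
    map_neg_withDensity,
    ← withDensity_add_left (hf.indicator measurableSet_Iio)]
  congr 1
  funext x
  simp only [Pi.add_apply, indicator_apply, mem_Iio]
  rw [ENNReal.ofReal_add (by split_ifs <;> simp [rho_nonneg])
    (by split_ifs <;> simp [rho_nonneg])]
  congr 1 <;> split_ifs <;> first | linarith | simp

theorem stmt_18_general (ξ η : ℕ → ℝ) (hξ : ∀ n, 0 < ξ n) (hη : ∀ n, 0 < η n)
    (hne : Tendsto (fun n : ℕ => Real.sqrt n * η n) atTop atTop)
    (k : ℕ → ℕ)
    (m : ℕ) (hm : ∀ᶠ n in atTop, n - k n = m)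
    (θ σ : ℕ → ℝ) (hσ : ∀ n, 0 < σ n)
    (ζ : EReal)
    (hζ : Tendsto (fun n : ℕ => ((θ n / (σ n * ξ n * η n) : ℝ) : EReal)) atTop (nhds ζ))
    (μ : ℕ → Measure ℝ)
    (hμ : ∀ n : ℕ, μ n =
      Measure.map
        (fun p : ℝ × ℝ => (σ n)⁻¹ * (ξ n * η n)⁻¹ * (softF (σ n) (ξ n) (η n) p - θ n))
        (jointMeas n (n - k n) (ξ n) (θ n) (σ n))) :
    (∀ ζr : ℝ, ζ = (ζr : EReal) →
        WeakConv μ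
          (ENNReal.ofReal (∫ s in Ioi |ζr|, rho m s) • Measure.dirac (-ζr) +
            volume.withDensity fun x : ℝ =>
              ENNReal.ofReal
                (rho m x * (if x + ζr < 0 then 1 else 0) +
                  rho m (-x) * (if 0 < x + ζr then 1 else 0)))) ∧
    (ζ = ⊤ → WeakConv μ (volume.withDensity fun x : ℝ => ENNReal.ofReal (rho m (-x)))) ∧
    (ζ = ⊥ → WeakConv μ (volume.withDensity fun x : ℝ => ENNReal.ofReal (rho m x))) := by
  set t : ℕ → ℝ := fun n => θ n / (σ n * ξ n * η n)
  have hrep : ∀ᶠ n in atTop, μ n = ((gaussianReal 0 1).prod (rhoMeasure m)).map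
      fun p => soft (t n + (Real.sqrt n * η n)⁻¹ * p.1) p.2 - t n := by
    filter_upwards [hm] with n hn
    rw [hμ n, hn, map_jointMeas_eq_map_soft n m (hξ n) (hη n) (hσ n)]
  have hε : Tendsto (fun n : ℕ => (Real.sqrt n * η n)⁻¹) atTop (𝓝 0) := hne.inv_tendsto_atTop
  refine ⟨fun ζr hζr => ?_, fun htop => ?_, fun hbot => ?_⟩
  · have ht : Tendsto t atTop (𝓝 ζr) := EReal.tendsto_coe.1 (hζr ▸ hζ)
    rw [← map_rhoMeasure_soft_sub]
    exact weakConv_of_tendsto_soft ((continuous_soft_right ζr).sub continuous_const).measurable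
      hrep hε fun s hs _ hw => tendsto_soft_sub_of_tendsto hs.le ht hw
  · have ht : Tendsto t atTop atTop := EReal.tendsto_coe_nhds_top_iff.1 (htop ▸ hζ)
    rw [← map_neg_withDensity (fun x => ENNReal.ofReal (rho m x))]
    exact weakConv_of_tendsto_soft measurable_neg hrep hε fun s hs _ hw =>
      tendsto_soft_sub_of_tendsto_atTop hs.le ht hw
  · have ht : Tendsto t atTop atBot := EReal.tendsto_coe_nhds_bot_iff.1 (hbot ▸ hζ)
    rw [← Measure.map_id (μ := volume.withDensity _)]
    exact weakConv_of_tendsto_soft measurable_id hrep hε fun s hs _ hw =>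
      tendsto_soft_sub_of_tendsto_atBot hs.le ht hw

/-- consistent tuning, weak limits of the law of the scaled and centered
feasible soft-thresholding estimator when `n - k_n` is eventually constant equal to `m`. -/
theorem stmt_18 (ξ η : ℕ → ℝ) (hξ : ∀ n, 0 < ξ n) (hη : ∀ n, 0 < η n)
    (hxe : Tendsto (fun n : ℕ => ξ n * η n) atTop (nhds 0))
    (hne : Tendsto (fun n : ℕ => Real.sqrt n * η n) atTop atTop)
    (k : ℕ → ℕ) (hk : ∀ n, 2 ≤ n → 1 ≤ k n ∧ k n < n)
    (m : ℕ) (hm : ∀ᶠ n in atTop, n - k n = m)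
    (θ σ : ℕ → ℝ) (hσ : ∀ n, 0 < σ n)
    (ζ : EReal)
    (hζ : Tendsto (fun n : ℕ => ((θ n / (σ n * ξ n * η n) : ℝ) : EReal)) atTop (nhds ζ))
    (μ : ℕ → Measure ℝ)
    (hμ : ∀ n : ℕ, μ n =
      Measure.map
        (fun p : ℝ × ℝ => (σ n)⁻¹ * (ξ n * η n)⁻¹ * (softF (σ n) (ξ n) (η n) p - θ n))
        (jointMeas n (n - k n) (ξ n) (θ n) (σ n))) :
    (∀ ζr : ℝ, ζ = (ζr : EReal) →
        WeakConv μ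
          (ENNReal.ofReal (∫ s in Ioi |ζr|, rho m s) • Measure.dirac (-ζr) +
            volume.withDensity fun x : ℝ =>
              ENNReal.ofReal
                (rho m x * (if x + ζr < 0 then 1 else 0) +
                  rho m (-x) * (if 0 < x + ζr then 1 else 0)))) ∧
    (ζ = ⊤ → WeakConv μ (volume.withDensity fun x : ℝ => ENNReal.ofReal (rho m (-x)))) ∧
    (ζ = ⊥ → WeakConv μ (volume.withDensity fun x : ℝ => ENNReal.ofReal (rho m x))) :=
  stmt_18_general ξ η hξ hη hne k m hm θ σ hσ ζ hζ μ hμ
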